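/- Let 𝔽 be ℝ or ℂ, let 𝒰 be a nonprincipal ultrafilter on ℕ, and let X be an infinite-dimensional normed space over 𝔽 such that the dual X* contains an isometric copy of ℓ¹, i.e. there is a sequence (e_n*) in X* with ‖Σ_{n≤m} r_n e_n*‖ = Σ_{n≤m}|r_n| for every m and all scalars r_1,…,r_m ∈ 𝔽. Then there exist an index set I of cardinality 2^(2^ℵ₀) and a linear isometric embedding J : ℓ¹(I) → (X^𝒰)* such that J(f) does not belong to the image of the canonical isometry j : (X*)^𝒰 → (X^𝒰)* for any nonzero f ∈ ℓ¹(I). -/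

import Mathlib

/-!
Ultrapowers of normed spaces along a nonprincipal ultrafilter `𝒰` on `ℕ`.

`BoundedSeq X = ℓ∞(X)` is the normed space of bounded sequences in `X` with the sup norm,
`nullSeq 𝕜 𝒰 X = c_𝒰(X)` is the subspace of sequences whose norms tend to `0` along `𝒰`,
and `Ultrapower 𝕜 𝒰 X = ℓ∞(X)/c_𝒰(X)` is the ultrapower, with quotient map `up 𝕜 𝒰`.

The canonical linear isometry `j : (X*)^𝒰 → (X^𝒰)*` sends the class of a (bounded)
sequence of functionals `(f_n)` to the functional `(x_n)^𝒰 ↦ lim_{n→𝒰} f_n(x_n)`; hence a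
functional `φ` on `X^𝒰` lies in the image of `j` if and only if there is a bounded
sequence `(f_n)` in `X*` with `φ((x_n)^𝒰) = lim_{n→𝒰} f_n(x_n)` for every bounded
sequence `(x_n)`.  This is the predicate `InCanonicalImage` below.
-/

open Filter Topology
open scoped ENNReal

noncomputable section

/-- The normed space `ℓ∞(X)` of bounded sequences in `X`, with the sup norm. -/
abbrev BoundedSeq (X : Type*) [NormedAddCommGroup X] := lp (fun _ : ℕ => X) ∞

variable (𝕜 : Type*) [NontriviallyNormedField 𝕜]

/-- `c_𝒰(X)`: the subspace of bounded sequences tending to zero in norm along `𝒰`. -/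
def nullSeq (𝒰 : Ultrafilter ℕ) (X : Type*) [NormedAddCommGroup X] [NormedSpace 𝕜 X] :
    Submodule 𝕜 (BoundedSeq X) where
  carrier := {f | Tendsto (fun n => ‖f n‖) 𝒰 (𝓝 0)}
  zero_mem' := by simp [tendsto_const_nhds]
  add_mem' := by
    intro f g hf hg
    have h := hf.add hg
    rw [add_zero] at h
    exact squeeze_zero (fun n => norm_nonneg _) (fun n => norm_add_le _ _) h
  smul_mem' := by
    intro c f hf
    have h := hf.const_mul ‖c‖
    rw [mul_zero] at h
    exact squeeze_zero (fun n => norm_nonneg _) (fun n => by simp [norm_smul]) h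

/-- The ultrapower `X^𝒰 = ℓ∞(X)/c_𝒰(X)`. -/
abbrev Ultrapower (𝒰 : Ultrafilter ℕ) (X : Type*) [NormedAddCommGroup X] [NormedSpace 𝕜 X] :=
  BoundedSeq X ⧸ nullSeq 𝕜 𝒰 X

/-- The quotient map `ℓ∞(X) → X^𝒰`, `(x_n) ↦ (x_n)^𝒰`. -/
def up (𝒰 : Ultrafilter ℕ) {X : Type*} [NormedAddCommGroup X] [NormedSpace 𝕜 X]
    (f : BoundedSeq X) : Ultrapower 𝕜 𝒰 X := Submodule.Quotient.mk f

/-- `φ : (X^𝒰)*` lies in the image of the canonical linear isometry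
`j : (X*)^𝒰 → (X^𝒰)*` iff it is induced by a bounded sequence of functionals on `X`. -/
def InCanonicalImage (𝒰 : Ultrafilter ℕ) {X : Type*} [NormedAddCommGroup X] [NormedSpace 𝕜 X]
    (φ : StrongDual 𝕜 (Ultrapower 𝕜 𝒰 X)) : Prop :=
  ∃ f : ℕ → StrongDual 𝕜 X, (∃ C : ℝ, ∀ n, ‖f n‖ ≤ C) ∧
    ∀ x : BoundedSeq X, Tendsto (fun n => f n (x n)) 𝒰 (𝓝 (φ (up 𝕜 𝒰 x)))


/-!
For a nonprincipal ultrafilter `𝒱` on `ℕ` let `φ_𝒱 ∈ (X^𝒰)*` be the weak-* limit along `𝒱` of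
the canonical images of the `e_n`, so `φ_𝒱((x_k)^𝒰) = lim_{n→𝒱} lim_{k→𝒰} e_n(x_k)`. Because
`(e_n)` spans `ℓ¹` isometrically, every unimodular pattern `(s_n)` is realized by a point of the
unit ball of `X^𝒰` at which the image of each `e_n` takes the value `s_n`. Distinct ultrafilters
are separated by sets, so such patterns give finitely many of the `φ_𝒱` arbitrary unimodular
values at once; this makes `f ↦ ∑ f_𝒱 φ_𝒱` an isometry on `ℓ¹` of the `2^𝔠` nonprincipal
ultrafilters (Pospíšil's count).

A functional `(x_k)^𝒰 ↦ lim_{k→𝒰} g_k(x_k)` from the canonical image, on the other hand, can be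
diagonalised: if it takes the same value at realizations of the patterns `s` cut off to `-1`
below `d`, for every `d`, it takes that value also at a realization of their pointwise limit, the
constant pattern `-1`. The `φ_𝒱` do not see the cut-offs; choosing `s` with `φ_𝒱 = ±1` on the
finitely many `𝒱` carrying most of the mass of `f ≠ 0` shows that `∑ f_𝒱 φ_𝒱` is not in the
canonical image.
-/

open Cardinal

section WeakStarLimit

variable {𝕜 : Type*} [NontriviallyNormedField 𝕜] [ProperSpace 𝕜] {E : Type*}
  [SeminormedAddCommGroup E] [NormedSpace 𝕜 E] {α : Type*}

-- Only meaningful for bounded families, which converge weak-* by Banach–Alaoglu;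
-- otherwise `limUnder` returns a junk value.
def weakStarLim (𝒱 : Ultrafilter α) (ψ : α → StrongDual 𝕜 E) : StrongDual 𝕜 E :=
  WeakDual.toStrongDual (limUnder (𝒱 : Filter α) fun a => StrongDual.toWeakDual (ψ a))

variable {𝒱 : Ultrafilter α} {ψ : α → StrongDual 𝕜 E} {C : ℝ}

theorem tendsto_weakStarLim_and_norm_le (hψ : ∀ a, ‖ψ a‖ ≤ C) :
    Tendsto (fun a => StrongDual.toWeakDual (ψ a)) 𝒱
      (𝓝 (StrongDual.toWeakDual (weakStarLim 𝒱 ψ))) ∧ ‖weakStarLim 𝒱 ψ‖ ≤ C := by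
  obtain ⟨L, hL, hlim⟩ :=
    (WeakDual.isCompact_closedBall (0 : StrongDual 𝕜 E) C).ultrafilter_le_nhds
      (𝒱.map fun a => StrongDual.toWeakDual (ψ a)) <| by
        rw [Ultrafilter.coe_map, Filter.le_principal_iff]
        exact Filter.mem_map.2 (Filter.univ_mem' fun a => by simpa using hψ a)
  have hL' : weakStarLim 𝒱 ψ = WeakDual.toStrongDual L := by
    rw [weakStarLim, Filter.Tendsto.limUnder_eq hlim]
  refine ⟨by rw [hL']; exact hlim, ?_⟩
  simpa [hL', Metric.mem_closedBall, dist_zero_right] using hL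

theorem tendsto_weakStarLim_apply (hψ : ∀ a, ‖ψ a‖ ≤ C) (x : E) :
    Tendsto (fun a => ψ a x) 𝒱 (𝓝 (weakStarLim 𝒱 ψ x)) :=
  ((WeakDual.eval_continuous x).tendsto _).comp (tendsto_weakStarLim_and_norm_le hψ).1

theorem norm_weakStarLim_le (hψ : ∀ a, ‖ψ a‖ ≤ C) : ‖weakStarLim 𝒱 ψ‖ ≤ C :=
  (tendsto_weakStarLim_and_norm_le hψ).2

end WeakStarLimit

theorem Submodule.norm_liftQL_le {𝕜 : Type*} [NontriviallyNormedField 𝕜] {E F : Type*}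
    [SeminormedAddCommGroup E] [NormedSpace 𝕜 E] [SeminormedAddCommGroup F] [NormedSpace 𝕜 F]
    {S : Submodule 𝕜 E} (f : E →L[𝕜] F) (hf : S ≤ (f : E →ₗ[𝕜] F).ker) :
    ‖S.liftQL f hf‖ ≤ ‖f‖ :=
  ContinuousLinearMap.opNorm_le_bound _ (norm_nonneg f) fun q =>
    (QuotientAddGroup.norm_lift_apply_le (S := S.toAddSubgroup)
      ((f : E →+ F).mkNormedAddGroupHom ‖f‖ f.le_opNorm) (fun _ hx => hf hx) q).trans
      (mul_le_mul_of_nonneg_right (AddMonoidHom.mkNormedAddGroupHom_norm_le _ (norm_nonneg f) _)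
        (norm_nonneg q))

theorem RCLike.norm_sub_sq_le {𝕜 : Type*} [RCLike 𝕜] {a s : 𝕜} (ha : ‖a‖ ≤ 1) (hs : ‖s‖ = 1) :
    ‖a - s‖ ^ 2 ≤ 2 * (1 - RCLike.re (starRingEnd 𝕜 s * a)) := by
  have h₁ := RCLike.norm_sq_eq_def (z := a - s)
  have h₂ := RCLike.norm_sq_eq_def (z := a)
  have h₃ := RCLike.norm_sq_eq_def (z := s)
  simp only [map_sub, RCLike.mul_re, RCLike.conj_re, RCLike.conj_im] at h₁ ⊢
  nlinarith [norm_nonneg a]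

theorem ContinuousLinearMap.exists_norm_le_one_lt_re_apply {𝕜 : Type*} [RCLike 𝕜] {E : Type*}
    [NormedAddCommGroup E] [NormedSpace 𝕜 E] (G : StrongDual 𝕜 E) {r : ℝ} (hr : r < ‖G‖) :
    ∃ y, ‖y‖ ≤ 1 ∧ r < RCLike.re (G y) := by
  obtain ⟨x, hx, hrx⟩ := G.exists_lt_apply_of_lt_opNorm hr
  obtain ⟨c, hc, hcx⟩ := RCLike.exists_norm_eq_mul_self (G x)
  refine ⟨c • x, by rw [norm_smul, hc, one_mul]; exact hx.le, ?_⟩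
  rwa [map_smul, smul_eq_mul, ← hcx, RCLike.ofReal_re]

section LpOne

variable {ι : Type*} {𝕜 : Type*} [NontriviallyNormedField 𝕜]

theorem lpOne_summable_norm (f : lp (fun _ : ι => 𝕜) 1) : Summable fun i => ‖f i‖ := by
  simpa using (lp.memℓp f).summable (by norm_num)

theorem lpOne_norm_eq_tsum (f : lp (fun _ : ι => 𝕜) 1) : ‖f‖ = ∑' i, ‖f i‖ := by
  simp [lp.norm_eq_tsum_rpow (show 0 < (1 : ℝ≥0∞).toReal by norm_num)]

theorem lpOne_exists_tsum_compl_lt (f : lp (fun _ : ι => 𝕜) 1) {ε : ℝ} (hε : 0 < ε)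
    (s : Finset ι) : ∃ F, s ⊆ F ∧ ∑' i : {i // i ∉ F}, ‖f i‖ < ε := by
  classical
  obtain ⟨F₀, hF₀⟩ := Filter.eventually_atTop.1
    ((tendsto_tsum_compl_atTop_zero fun i => ‖f i‖).eventually (gt_mem_nhds hε))
  exact ⟨s ∪ F₀, Finset.subset_union_left, hF₀ _ Finset.subset_union_right⟩

variable {F : Type*} [SeminormedAddCommGroup F] [NormedSpace 𝕜 F] {v : ι → F}

theorem norm_smul_le_of_norm_le_one {c : 𝕜} {x : F} (hx : ‖x‖ ≤ 1) : ‖c • x‖ ≤ ‖c‖ :=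
  (norm_smul_le c x).trans (mul_le_of_le_one_right (norm_nonneg c) hx)

theorem lpOne_summable_norm_smul (hv : ∀ i, ‖v i‖ ≤ 1) (f : lp (fun _ : ι => 𝕜) 1) :
    Summable fun i => ‖f i • v i‖ :=
  (lpOne_summable_norm f).of_nonneg_of_le (fun _ => norm_nonneg _) fun i =>
    norm_smul_le_of_norm_le_one (hv i)

theorem norm_tsum_smul_le (hv : ∀ i, ‖v i‖ ≤ 1) (f : lp (fun _ : ι => 𝕜) 1) :
    ‖∑' i, f i • v i‖ ≤ ‖f‖ := by
  rw [lpOne_norm_eq_tsum]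
  exact (norm_tsum_le_tsum_norm (lpOne_summable_norm_smul hv f)).trans <|
    (lpOne_summable_norm_smul hv f).tsum_le_tsum (fun i => norm_smul_le_of_norm_le_one (hv i))
      (lpOne_summable_norm f)

variable [CompleteSpace F] [T2Space F]

theorem norm_tsum_smul_sub_sum_le (hv : ∀ i, ‖v i‖ ≤ 1) (f : lp (fun _ : ι => 𝕜) 1)
    (s : Finset ι) : ‖∑' i, f i • v i - ∑ i ∈ s, f i • v i‖ ≤ ∑' i : {i // i ∉ s}, ‖f i‖ := by
  rw [← (lpOne_summable_norm_smul hv f).of_norm.sum_add_tsum_subtype_compl s, add_sub_cancel_left]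
  exact (norm_tsum_le_tsum_norm ((lpOne_summable_norm_smul hv f).subtype _)).trans <|
    ((lpOne_summable_norm_smul hv f).subtype _).tsum_le_tsum
      (fun i => norm_smul_le_of_norm_le_one (hv i)) ((lpOne_summable_norm f).subtype _)

def lpOneSum (v : ι → F) (hv : ∀ i, ‖v i‖ ≤ 1) : lp (fun _ : ι => 𝕜) 1 →L[𝕜] F :=
  LinearMap.mkContinuous
    { toFun := fun f => ∑' i, f i • v i
      map_add' := fun f g => by
        simp only [lp.coeFn_add, Pi.add_apply, add_smul]
        exact (lpOne_summable_norm_smul hv f).of_norm.tsum_add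
          (lpOne_summable_norm_smul hv g).of_norm
      map_smul' := fun c f => by
        simp only [lp.coeFn_smul, Pi.smul_apply, smul_eq_mul, mul_smul, RingHom.id_apply]
        exact (lpOne_summable_norm_smul hv f).of_norm.tsum_const_smul c }
    1 fun f => by simpa using norm_tsum_smul_le hv f

theorem lpOneSum_apply (hv : ∀ i, ‖v i‖ ≤ 1) (f : lp (fun _ : ι => 𝕜) 1) :
    lpOneSum v hv f = ∑' i, f i • v i := rfl

theorem norm_lpOneSum_apply_le (hv : ∀ i, ‖v i‖ ≤ 1) (f : lp (fun _ : ι => 𝕜) 1) :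
    ‖lpOneSum v hv f‖ ≤ ‖f‖ :=
  norm_tsum_smul_le hv f

end LpOne

section LpOneDual

variable {ι : Type*} {𝕜 : Type*} [NontriviallyNormedField 𝕜] [CompleteSpace 𝕜] {E : Type*}
  [SeminormedAddCommGroup E] [NormedSpace 𝕜 E] {v : ι → StrongDual 𝕜 E}
  (hv : ∀ i, ‖v i‖ ≤ 1) (f : lp (fun _ : ι => 𝕜) 1)

theorem lpOneSum_apply_apply (q : E) : lpOneSum v hv f q = ∑' i, f i * v i q := by
  have h := (ContinuousLinearMap.apply 𝕜 𝕜 q).map_tsum (lpOne_summable_norm_smul hv f).of_norm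
  simpa only [ContinuousLinearMap.apply_apply, smul_apply, smul_eq_mul, lpOneSum_apply] using h

theorem norm_lpOneSum_apply_sub_sum_le {q : E} (hq : ‖q‖ ≤ 1) (s : Finset ι) :
    ‖lpOneSum v hv f q - ∑ i ∈ s, f i * v i q‖ ≤ ∑' i : {i // i ∉ s}, ‖f i‖ := by
  have hvq : ∀ i, ‖v i q‖ ≤ 1 := fun i =>
    ((v i).le_opNorm q).trans (mul_le_one₀ (hv i) (norm_nonneg q) hq)
  rw [lpOneSum_apply_apply]
  simpa using norm_tsum_smul_sub_sum_le (v := fun i => v i q) hvq f s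

end LpOneDual

theorem Ultrafilter.exists_mem_iff_eq {α ι : Type*} {U : ι → Ultrafilter α}
    (hU : Function.Injective U) (F : Finset ι) :
    ∃ B : ι → Set α, ∀ i ∈ F, ∀ j ∈ F, B i ∈ U j ↔ i = j := by
  have hsep : ∀ i j, ∃ S ∈ U i, i ≠ j → S ∉ U j := fun i j => by
    by_cases hij : i = j
    · exact ⟨Set.univ, Filter.univ_mem, fun h => absurd hij h⟩
    · by_contra! h
      exact hij (hU (Ultrafilter.eq_of_le fun S hS => (h S hS).2).symm)
  choose S hSmem hSnot using hsep
  refine ⟨fun i => ⋂ j ∈ F, S i j, fun i _ j hj => ⟨fun hB => ?_, ?_⟩⟩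
  · by_contra hij
    exact hSnot i j hij (Filter.mem_of_superset hB (Set.biInter_subset_of_mem hj))
  · rintro rfl
    exact (Filter.biInter_finset_mem F).2 fun j _ => hSmem i j

theorem Ultrafilter.exists_unimodular_eventually_eq {α ι 𝕜 : Type*} [RCLike 𝕜]
    {U : ι → Ultrafilter α} (hU : Function.Injective U) (F : Finset ι) {c : ι → 𝕜}
    (hc : ∀ i, ‖c i‖ = 1) :
    ∃ s : α → 𝕜, (∀ a, ‖s a‖ = 1) ∧ ∀ i ∈ F, ∀ᶠ a in U i, s a = c i := by
  classical
  obtain ⟨B, hB⟩ := Ultrafilter.exists_mem_iff_eq hU F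
  refine ⟨fun a => ∏ i ∈ F, if a ∈ B i then c i else 1, fun a => ?_, fun i hi => ?_⟩
  · simp only [norm_prod, apply_ite (‖·‖), hc, norm_one, ite_self, Finset.prod_const_one]
  have hBi : ∀ j ∈ F, ∀ᶠ a in U i, a ∈ B j ↔ j = i := fun j hj => by
    by_cases hji : j = i
    · subst hji
      exact Filter.mem_of_superset ((hB j hj j hj).2 rfl) fun a ha => by simpa using ha
    · exact Filter.mem_of_superset (Ultrafilter.compl_mem_iff_notMem.2 (mt (hB j hj i hi).1 hji))
        fun a ha => by simpa [hji] using ha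
  filter_upwards [(Filter.eventually_all_finset F).2 hBi] with a ha
  rw [Finset.prod_eq_single_of_mem i hi fun j hj hji => if_neg (mt (ha j hj).1 hji),
    if_pos ((ha i hi).2 rfl)]

theorem exists_diagonal_tendsto {Y M : Type*} [PseudoMetricSpace M] {l : Filter ℕ}
    (hl : l ≤ atTop) {R : ℕ → ℕ → Y → Prop} {u : ℕ → Y → M} {β : M}
    (h : ∀ d, ∃ x : ℕ → Y, (∀ k, R d k (x k)) ∧ Tendsto (fun k => u k (x k)) l (𝓝 β)) :
    ∃ (D : ℕ → ℕ) (x : ℕ → Y), Tendsto D l atTop ∧ (∀ k, R (D k) k (x k)) ∧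
      Tendsto (fun k => u k (x k)) l (𝓝 β) := by
  classical
  choose x hxR hxlim using h
  set P : ℕ → ℕ → Prop := fun k d => ∃ y, R d k y ∧ dist (u k y) β < 1 / ((d : ℝ) + 1)
  have hP : ∀ d, ∀ᶠ k in l, P k d := fun d =>
    (Metric.tendsto_nhds.1 (hxlim d) _ Nat.one_div_pos_of_nat).mono fun k hk =>
      ⟨x d k, hxR d k, hk⟩
  set D : ℕ → ℕ := fun k => Nat.findGreatest (P k) k
  have hPD : ∀ᶠ k in l, P k (D k) :=
    (hP 0).mono fun k hk => Nat.findGreatest_spec (Nat.zero_le k) hk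
  have hD : Tendsto D l atTop := tendsto_atTop.2 fun d =>
    ((hP d).and (hl (eventually_ge_atTop d))).mono fun k hk => Nat.le_findGreatest hk.2 hk.1
  set y : ℕ → Y := fun k => if hk : P k (D k) then hk.choose else x 0 k
  refine ⟨D, y, hD, fun k => ?_, ?_⟩
  · by_cases hk : P k (D k)
    · simpa [y, hk] using hk.choose_spec.1
    · have hD0 : D k = 0 := by_contra fun h => hk (Nat.findGreatest_of_ne_zero rfl h)
      rw [show y k = x 0 k from dif_neg hk, hD0]
      exact hxR 0 k
  · refine tendsto_iff_dist_tendsto_zero.2 <| squeeze_zero'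
      (.of_forall fun _ => dist_nonneg) ?_ (tendsto_one_div_add_atTop_nhds_zero_nat.comp hD)
    filter_upwards [hPD] with k hk
    simpa [y, hk] using hk.choose_spec.2.le

section Pospisil

/-- The sets `{(T, 𝒜) | T ∩ Y ∈ 𝒜}`, `Y ⊆ ℕ`, form an independent family on a countable set. -/
def indepSet (Y : Set ℕ) : Set (Finset ℕ × Finset (Finset ℕ)) :=
  {p | ∃ A ∈ p.2, (A : Set ℕ) = ↑p.1 ∩ Y}

theorem exists_finset_separating (G : Finset (Set ℕ)) :
    ∃ S : Finset ℕ, ∀ Y ∈ G, ∀ Z ∈ G, (∀ n ∈ S, n ∈ Y ↔ n ∈ Z) → Y = Z := by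
  classical
  have h : ∀ Y Z : Set ℕ, ∃ n, (n ∈ Y ↔ n ∈ Z) → Y = Z := fun Y Z => by
    by_cases hYZ : Y = Z
    · exact ⟨0, fun _ => hYZ⟩
    · obtain ⟨n, hn⟩ : ∃ n, ¬(n ∈ Y ↔ n ∈ Z) := by
        by_contra! h
        exact hYZ (Set.ext h)
      exact ⟨n, fun h => absurd h hn⟩
  choose n hn using h
  exact ⟨(G ×ˢ G).image fun p => n p.1 p.2, fun Y hY Z hZ h =>
    hn Y Z (h _ (Finset.mem_image_of_mem (fun p : Set ℕ × Set ℕ => n p.1 p.2)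
      (Finset.mem_product.2 ⟨hY, hZ⟩ : (Y, Z) ∈ G ×ˢ G)))⟩

def indepBox (𝒮 : Set (Set ℕ)) (G : Finset (Set ℕ)) (M : Finset ℕ) :
    Set (Finset ℕ × Finset (Finset ℕ)) :=
  {p | (∀ Y ∈ G, p ∈ indepSet Y ↔ Y ∈ 𝒮) ∧ M ⊆ p.1}

theorem indepBox_nonempty (𝒮 : Set (Set ℕ)) (G : Finset (Set ℕ)) (M : Finset ℕ) :
    (indepBox 𝒮 G M).Nonempty := by
  classical
  obtain ⟨S, hS⟩ := exists_finset_separating G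
  refine ⟨(S ∪ M, ({Y ∈ G | Y ∈ 𝒮}).image fun Y => {n ∈ S ∪ M | n ∈ Y}), fun Y hY => ?_,
    Finset.subset_union_right⟩
  dsimp only [indepSet, Set.mem_ofPred_eq]
  simp only [Finset.mem_image, Finset.mem_filter, exists_exists_and_eq_and, Finset.coe_filter]
  constructor
  · rintro ⟨Z, ⟨hZ, hZ𝒮⟩, hZY⟩
    rwa [hS Z hZ Y hY fun n hn => by simpa [hn] using Set.ext_iff.1 hZY n] at hZ𝒮
  · exact fun h => ⟨Y, ⟨hY, h⟩, by ext; simp⟩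

theorem indepBox_anti (𝒮 : Set (Set ℕ)) :
    Antitone fun GM : Finset (Set ℕ) × Finset ℕ => indepBox 𝒮 GM.1 GM.2 :=
  fun _ _ h _ hp => ⟨fun Y hY => hp.1 Y (h.1 hY), h.2.trans hp.2⟩

def indepFilter (𝒮 : Set (Set ℕ)) : Filter (Finset ℕ × Finset (Finset ℕ)) :=
  ⨅ GM : Finset (Set ℕ) × Finset ℕ, 𝓟 (indepBox 𝒮 GM.1 GM.2)

instance indepFilter_neBot (𝒮 : Set (Set ℕ)) : (indepFilter 𝒮).NeBot :=
  iInf_neBot_of_directed'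
    (Antitone.directed_ge fun _ _ h => Filter.principal_mono.2 (indepBox_anti 𝒮 h))
    fun GM => Filter.principal_neBot_iff.2 (indepBox_nonempty 𝒮 GM.1 GM.2)

def indepUltrafilter (𝒮 : Set (Set ℕ)) : Ultrafilter (Finset ℕ × Finset (Finset ℕ)) :=
  Ultrafilter.of (indepFilter 𝒮)

theorem indepBox_mem_indepUltrafilter (𝒮 : Set (Set ℕ)) (G : Finset (Set ℕ)) (M : Finset ℕ) :
    indepBox 𝒮 G M ∈ indepUltrafilter 𝒮 :=
  Ultrafilter.of_le _ (Filter.mem_iInf_of_mem (G, M) (Filter.mem_principal_self _))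

theorem indepSet_mem_indepUltrafilter_iff {𝒮 : Set (Set ℕ)} {Y : Set ℕ} :
    indepSet Y ∈ indepUltrafilter 𝒮 ↔ Y ∈ 𝒮 := by
  have h := indepBox_mem_indepUltrafilter 𝒮 {Y} ∅
  have hY : ∀ p ∈ indepBox 𝒮 {Y} ∅, p ∈ indepSet Y ↔ Y ∈ 𝒮 := fun p hp =>
    hp.1 Y (Finset.mem_singleton_self Y)
  by_cases hY𝒮 : Y ∈ 𝒮
  · exact iff_of_true (Filter.mem_of_superset h fun p hp => (hY p hp).2 hY𝒮) hY𝒮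
  · exact iff_of_false (fun hI => Ultrafilter.compl_notMem_iff.2 hI
      (Filter.mem_of_superset h fun p hp => mt (hY p hp).1 hY𝒮)) hY𝒮

theorem indepUltrafilter_injective : Function.Injective indepUltrafilter := fun 𝒮 𝒯 h =>
  Set.ext fun Y => by
    rw [← indepSet_mem_indepUltrafilter_iff, h, indepSet_mem_indepUltrafilter_iff]

theorem indepUltrafilter_le_cofinite (𝒮 : Set (Set ℕ)) :
    (indepUltrafilter 𝒮 : Filter (Finset ℕ × Finset (Finset ℕ))) ≤ cofinite := by
  refine (indepUltrafilter 𝒮).le_cofinite_or_eq_pure.resolve_right ?_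
  rintro ⟨p, hp⟩
  obtain ⟨m, hm⟩ := Infinite.exists_notMem_finset p.1
  have h := indepBox_mem_indepUltrafilter 𝒮 ∅ {m}
  rw [hp, Ultrafilter.mem_pure] at h
  exact hm (h.2 (Finset.mem_singleton_self m))

theorem mk_nonprincipal_ultrafilter (α : Type*) [Countable α] [Infinite α] :
    #{𝒱 : Ultrafilter α // (𝒱 : Filter α) ≤ cofinite} = (2 : Cardinal) ^ (2 : Cardinal) ^ ℵ₀ := by
  refine le_antisymm ?_ ?_
  · calc #{𝒱 : Ultrafilter α // (𝒱 : Filter α) ≤ cofinite}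
        ≤ #(Set (Set α)) := mk_le_of_injective (f := fun 𝒱 => (𝒱.1 : Filter α).sets)
          fun _ _ h => Subtype.ext (Ultrafilter.coe_injective (Filter.filter_eq h))
      _ = (2 : Cardinal) ^ (2 : Cardinal) ^ ℵ₀ := by rw [mk_set, mk_set, mk_eq_aleph0]
  · obtain ⟨φ⟩ := nonempty_equiv_of_countable (α := Finset ℕ × Finset (Finset ℕ)) (β := α)
    have hinj : Function.Injective fun 𝒮 : Set (Set ℕ) =>
        (⟨(indepUltrafilter 𝒮).map φ, fun s hs => indepUltrafilter_le_cofinite 𝒮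
          (φ.injective.tendsto_cofinite hs)⟩ : {𝒱 : Ultrafilter α // (𝒱 : Filter α) ≤ cofinite}) :=
      fun 𝒮 𝒯 h => indepUltrafilter_injective <| by
        simpa [Ultrafilter.map_map] using congrArg (fun 𝒱 => 𝒱.1.map φ.symm) h
    simpa [mk_set, mk_nat] using lift_mk_le_lift_mk_of_injective hinj

end Pospisil

section Pattern

variable {𝕜 : Type*} [RCLike 𝕜] {X : Type*} [NormedAddCommGroup X] [NormedSpace 𝕜 X]

variable (e : ℕ → StrongDual 𝕜 X) in
def ApproxPattern (t : ℕ → 𝕜) (k : ℕ) (y : X) : Prop :=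
  ‖y‖ ≤ 1 ∧ ∀ n < k, ‖e n y - t n‖ ≤ 1 / ((k : ℝ) + 1)

def unitBallSeq (x : ℕ → X) (hx : ∀ k, ‖x k‖ ≤ 1) : BoundedSeq X :=
  ⟨x, memℓp_infty ⟨1, Set.forall_mem_range.2 hx⟩⟩

theorem norm_unitBallSeq_le (x : ℕ → X) (hx : ∀ k, ‖x k‖ ≤ 1) : ‖unitBallSeq x hx‖ ≤ 1 :=
  lp.norm_le_of_forall_le zero_le_one hx

variable {e : ℕ → StrongDual 𝕜 X}

theorem tendsto_apply_of_approxPattern {l : Filter ℕ} (hl : l ≤ atTop) {T : ℕ → ℕ → 𝕜}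
    {t : ℕ → 𝕜} {x : ℕ → X} (hx : ∀ k, ApproxPattern e (T k) k (x k))
    (hT : ∀ n, ∀ᶠ k in l, T k n = t n) (n : ℕ) :
    Tendsto (fun k => e n (x k)) l (𝓝 (t n)) := by
  rw [tendsto_iff_norm_sub_tendsto_zero]
  refine squeeze_zero_norm' ?_ (tendsto_one_div_add_atTop_nhds_zero_nat.mono_left hl)
  filter_upwards [hT n, hl (eventually_gt_atTop n)] with k hTk hk
  rw [norm_norm, ← hTk]
  exact (hx k).2 n hk

variable (he : ∀ (m : ℕ) (r : ℕ → 𝕜),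
    ‖∑ n ∈ Finset.range m, r n • e n‖ = ∑ n ∈ Finset.range m, ‖r n‖)
include he

theorem norm_le_one_of_isometric (n : ℕ) : ‖e n‖ ≤ 1 := by
  have h := he (n + 1) (Pi.single n 1)
  have hn : n ∈ Finset.range (n + 1) := Finset.self_mem_range_succ n
  rw [Finset.sum_eq_single_of_mem n hn fun m _ hm => by
      rw [Pi.single_eq_of_ne hm]; exact zero_smul 𝕜 (e m),
    Finset.sum_eq_single_of_mem n hn fun m _ hm => by rw [Pi.single_eq_of_ne hm, norm_zero]] at h
  simpa using h.le

-- `y` almost norms `∑_{n<k} conj(s n) • e n`, a functional of norm `k` that is a sum of `k` terms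
-- of norm at most `1`, so each term `conj(s n) * e n y` must be close to `1`.
theorem exists_forall_norm_sub_lt {s : ℕ → 𝕜} (hs : ∀ n, ‖s n‖ = 1) (k : ℕ) {δ : ℝ}
    (hδ : 0 < δ) : ∃ y : X, ‖y‖ ≤ 1 ∧ ∀ n < k, ‖e n y - s n‖ < δ := by
  set G : StrongDual 𝕜 X := ∑ n ∈ Finset.range k, starRingEnd 𝕜 (s n) • e n
  have hG : ‖G‖ = k := by simp [G, he, hs]
  obtain ⟨y, hy, hGy⟩ := G.exists_norm_le_one_lt_re_apply (r := k - δ ^ 2 / 2)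
    (by rw [hG]; linarith [pow_pos hδ 2])
  have hey : ∀ m, ‖e m y‖ ≤ 1 := fun m =>
    ((e m).le_opNorm y).trans (mul_le_one₀ (norm_le_one_of_isometric he m) (norm_nonneg y) hy)
  set T : ℕ → ℝ := fun m => RCLike.re (starRingEnd 𝕜 (s m) * e m y)
  have hT : ∀ m, T m ≤ 1 := fun m => (RCLike.re_le_norm _).trans (by simpa [hs] using hey m)
  have hsum : ∑ m ∈ Finset.range k, (1 - T m) < δ ^ 2 / 2 := by
    have : RCLike.re (G y) = ∑ m ∈ Finset.range k, T m := by simp [G, T]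
    simp only [Finset.sum_sub_distrib, Finset.sum_const, Finset.card_range, nsmul_eq_mul,
      mul_one]
    linarith
  refine ⟨y, hy, fun n hn => lt_of_pow_lt_pow_left₀ 2 hδ.le ?_⟩
  have h₁ : 1 - T n < δ ^ 2 / 2 := (Finset.single_le_sum (fun m _ => sub_nonneg.2 (hT m))
    (Finset.mem_range.2 hn)).trans_lt hsum
  linarith [RCLike.norm_sub_sq_le (hey n) (hs n)]

theorem exists_approxPattern {s : ℕ → 𝕜} (hs : ∀ n, ‖s n‖ = 1) (k : ℕ) :
    ∃ y, ApproxPattern e s k y :=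
  let ⟨y, hy, hys⟩ := exists_forall_norm_sub_lt he hs k (δ := 1 / ((k : ℝ) + 1)) (by positivity)
  ⟨y, hy, fun n hn => (hys n hn).le⟩

theorem exists_boundedSeq_approxPattern {s : ℕ → 𝕜} (hs : ∀ n, ‖s n‖ = 1) :
    ∃ x : BoundedSeq X, ‖x‖ ≤ 1 ∧ ∀ k, ApproxPattern e s k (x k) := by
  choose y hy using exists_approxPattern he hs
  exact ⟨unitBallSeq y fun k => (hy k).1, norm_unitBallSeq_le _ _, hy⟩

end Pattern

section Ultrapower

variable {𝕜 : Type*} [RCLike 𝕜] {X : Type*} [NormedAddCommGroup X] [NormedSpace 𝕜 X]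
  (𝒰 : Ultrafilter ℕ)

theorem norm_up_le (x : BoundedSeq X) : ‖up 𝕜 𝒰 x‖ ≤ ‖x‖ :=
  Submodule.Quotient.norm_mk_le _ x

theorem norm_comp_evalCLM_le (ψ : StrongDual 𝕜 X) (k : ℕ) :
    ‖ψ.comp (lp.evalCLM 𝕜 (fun _ => X) ∞ k)‖ ≤ ‖ψ‖ :=
  ContinuousLinearMap.opNorm_le_bound _ (norm_nonneg ψ) fun x =>
    (ψ.le_opNorm _).trans <| mul_le_mul_of_nonneg_left
      (lp.norm_apply_le_norm ENNReal.top_ne_zero x k) (norm_nonneg ψ)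

/-- `(x_k)^𝒰 ↦ lim_{k→𝒰} ψ(x_k)`: the canonical image `j((ψ)^𝒰)` of the constant sequence. -/
def dualToUltrapower (ψ : StrongDual 𝕜 X) : StrongDual 𝕜 (Ultrapower 𝕜 𝒰 X) :=
  (nullSeq 𝕜 𝒰 X).liftQL (weakStarLim 𝒰 fun k => ψ.comp (lp.evalCLM 𝕜 (fun _ => X) ∞ k)) <| by
    intro z hz
    have hz' : Tendsto (fun k => ‖z k‖) 𝒰 (𝓝 0) := hz
    refine tendsto_nhds_unique (tendsto_weakStarLim_apply (norm_comp_evalCLM_le ψ) z) ?_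
    refine squeeze_zero_norm (fun k => ψ.le_opNorm (z k)) ?_
    simpa using hz'.const_mul ‖ψ‖

variable {𝒰}

theorem tendsto_dualToUltrapower_up (ψ : StrongDual 𝕜 X) (x : BoundedSeq X) :
    Tendsto (fun k => ψ (x k)) 𝒰 (𝓝 (dualToUltrapower 𝒰 ψ (up 𝕜 𝒰 x))) :=
  tendsto_weakStarLim_apply (norm_comp_evalCLM_le ψ) x

theorem norm_dualToUltrapower_le (ψ : StrongDual 𝕜 X) : ‖dualToUltrapower 𝒰 ψ‖ ≤ ‖ψ‖ :=
  (Submodule.norm_liftQL_le _ _).trans (norm_weakStarLim_le (norm_comp_evalCLM_le ψ))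

end Ultrapower

section LimitFunctional

variable {𝕜 : Type*} [RCLike 𝕜] {X : Type*} [NormedAddCommGroup X] [NormedSpace 𝕜 X]

/-- `φ_𝒱`, with `φ_𝒱((x_k)^𝒰) = lim_{n→𝒱} lim_{k→𝒰} e_n(x_k)`. -/
def limitFunctional (𝒰 : Ultrafilter ℕ) (e : ℕ → StrongDual 𝕜 X) (𝒱 : Ultrafilter ℕ) :
    StrongDual 𝕜 (Ultrapower 𝕜 𝒰 X) :=
  weakStarLim 𝒱 fun n => dualToUltrapower 𝒰 (e n)

variable {𝒰 𝒱 : Ultrafilter ℕ} {e : ℕ → StrongDual 𝕜 X} (he1 : ∀ n, ‖e n‖ ≤ 1)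
include he1

theorem norm_limitFunctional_le : ‖limitFunctional 𝒰 e 𝒱‖ ≤ 1 :=
  norm_weakStarLim_le fun n => (norm_dualToUltrapower_le _).trans (he1 n)

theorem tendsto_limitFunctional_up {x : BoundedSeq X} {t : ℕ → 𝕜}
    (hx : ∀ n, Tendsto (fun k => e n (x k)) 𝒰 (𝓝 (t n))) :
    Tendsto t 𝒱 (𝓝 (limitFunctional 𝒰 e 𝒱 (up 𝕜 𝒰 x))) := by
  have ht : t = fun n => dualToUltrapower 𝒰 (e n) (up 𝕜 𝒰 x) :=
    funext fun n => tendsto_nhds_unique (hx n) (tendsto_dualToUltrapower_up _ x)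
  rw [ht]
  exact tendsto_weakStarLim_apply (fun n => (norm_dualToUltrapower_le _).trans (he1 n)) _

theorem limitFunctional_up_eq {x : BoundedSeq X} {t : ℕ → 𝕜} {c : 𝕜}
    (hx : ∀ n, Tendsto (fun k => e n (x k)) 𝒰 (𝓝 (t n))) (hc : ∀ᶠ n in 𝒱, t n = c) :
    limitFunctional 𝒰 e 𝒱 (up 𝕜 𝒰 x) = c :=
  tendsto_nhds_unique (tendsto_limitFunctional_up he1 hx)
    (tendsto_const_nhds.congr' (hc.mono fun _ h => h.symm))

end LimitFunctional

theorem InCanonicalImage.exists_tendsto_of_approxPattern {𝕜 : Type*} [RCLike 𝕜] {X : Type*}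
    [NormedAddCommGroup X] [NormedSpace 𝕜 X] {𝒰 : Ultrafilter ℕ}
    {ψ : StrongDual 𝕜 (Ultrapower 𝕜 𝒰 X)} (hψ : InCanonicalImage 𝕜 𝒰 ψ)
    (h𝒰 : (𝒰 : Filter ℕ) ≤ cofinite) {e : ℕ → StrongDual 𝕜 X} {t : ℕ → ℕ → 𝕜} {c : 𝕜}
    (ht : ∀ d n, n < d → t d n = c) {x : ℕ → BoundedSeq X}
    (hx : ∀ d k, ApproxPattern e (t d) k (x d k))
    (hψx : ∀ d, ψ (up 𝕜 𝒰 (x d)) = ψ (up 𝕜 𝒰 (x 0))) :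
    ∃ y : BoundedSeq X, ‖y‖ ≤ 1 ∧ (∀ n, Tendsto (fun k => e n (y k)) 𝒰 (𝓝 c)) ∧
      ψ (up 𝕜 𝒰 y) = ψ (up 𝕜 𝒰 (x 0)) := by
  obtain ⟨g, -, hg⟩ := hψ
  have hl : (𝒰 : Filter ℕ) ≤ atTop := h𝒰.trans Nat.cofinite_eq_atTop.le
  obtain ⟨D, y, hD, hy, hylim⟩ := exists_diagonal_tendsto hl
    (R := fun d k z => ApproxPattern e (t d) k z) (u := fun k z => g k z)
    fun d => ⟨x d, hx d, hψx d ▸ hg (x d)⟩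
  refine ⟨unitBallSeq y fun k => (hy k).1, norm_unitBallSeq_le _ _, fun n => ?_,
    tendsto_nhds_unique (hg _) hylim⟩
  exact tendsto_apply_of_approxPattern hl hy
    (fun n => (hD.eventually (eventually_gt_atTop n)).mono fun k hk => ht _ _ hk) n

section UltrapowerDualEmbedding

variable {𝕜 : Type*} [RCLike 𝕜] {X : Type*} [NormedAddCommGroup X] [NormedSpace 𝕜 X] {ι : Type*}

def ultrapowerDualEmbedding (𝒰 : Ultrafilter ℕ) {e : ℕ → StrongDual 𝕜 X}
    (he1 : ∀ n, ‖e n‖ ≤ 1) (U : ι → Ultrafilter ℕ) :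
    lp (fun _ : ι => 𝕜) 1 →L[𝕜] StrongDual 𝕜 (Ultrapower 𝕜 𝒰 X) :=
  lpOneSum (𝕜 := 𝕜) (fun i => limitFunctional 𝒰 e (U i)) fun _ => norm_limitFunctional_le he1

theorem norm_ultrapowerDualEmbedding_apply_sub_sum_le {𝒰 : Ultrafilter ℕ}
    {e : ℕ → StrongDual 𝕜 X} (he1 : ∀ n, ‖e n‖ ≤ 1) (U : ι → Ultrafilter ℕ)
    (f : lp (fun _ : ι => 𝕜) 1) {q : Ultrapower 𝕜 𝒰 X} (hq : ‖q‖ ≤ 1) (s : Finset ι) :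
    ‖ultrapowerDualEmbedding 𝒰 he1 U f q - ∑ i ∈ s, f i * limitFunctional 𝒰 e (U i) q‖ ≤
      ∑' i : {i // i ∉ s}, ‖f i‖ :=
  norm_lpOneSum_apply_sub_sum_le _ f hq s

variable {𝒰 : Ultrafilter ℕ} (h𝒰 : (𝒰 : Filter ℕ) ≤ cofinite) {e : ℕ → StrongDual 𝕜 X}
  (he : ∀ (m : ℕ) (r : ℕ → 𝕜),
    ‖∑ n ∈ Finset.range m, r n • e n‖ = ∑ n ∈ Finset.range m, ‖r n‖)
  {U : ι → Ultrafilter ℕ} (hU : Function.Injective U)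
include h𝒰 he hU

theorem exists_limitFunctional_eq (F : Finset ι) {c : ι → 𝕜} (hc : ∀ i, ‖c i‖ = 1) :
    ∃ q : Ultrapower 𝕜 𝒰 X, ‖q‖ ≤ 1 ∧ ∀ i ∈ F, limitFunctional 𝒰 e (U i) q = c i := by
  obtain ⟨s, hs, hsF⟩ := Ultrafilter.exists_unimodular_eventually_eq hU F hc
  obtain ⟨x, hx1, hx⟩ := exists_boundedSeq_approxPattern he hs
  exact ⟨up 𝕜 𝒰 x, (norm_up_le 𝒰 x).trans hx1, fun i hi =>
    limitFunctional_up_eq (norm_le_one_of_isometric he)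
      (tendsto_apply_of_approxPattern (h𝒰.trans Nat.cofinite_eq_atTop.le) hx
        fun n => .of_forall fun _ => rfl) (hsF i hi)⟩

theorem norm_ultrapowerDualEmbedding (f : lp (fun _ : ι => 𝕜) 1) :
    ‖ultrapowerDualEmbedding 𝒰 (norm_le_one_of_isometric he) U f‖ = ‖f‖ := by
  set J := ultrapowerDualEmbedding 𝒰 (norm_le_one_of_isometric he) U
  refine le_antisymm (norm_lpOneSum_apply_le _ f) (le_of_forall_pos_le_add fun ε hε => ?_)
  obtain ⟨F, -, hF⟩ := lpOne_exists_tsum_compl_lt f (half_pos hε) ∅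
  choose c hc hcf using fun i => RCLike.exists_norm_eq_mul_self (f i)
  obtain ⟨q, hq, hφ⟩ := exists_limitFunctional_eq h𝒰 he hU F hc
  have hsum : ∑ i ∈ F, f i * limitFunctional 𝒰 e (U i) q = ((∑ i ∈ F, ‖f i‖ : ℝ) : 𝕜) := by
    push_cast
    exact Finset.sum_congr rfl fun i hi => by rw [hφ i hi, mul_comm]; exact (hcf i).symm
  have happrox :=
    norm_ultrapowerDualEmbedding_apply_sub_sum_le (norm_le_one_of_isometric he) U f hq F
  rw [hsum, norm_sub_rev] at happrox
  have hnorm : ‖f‖ = ∑ i ∈ F, ‖f i‖ + ∑' i : {i // i ∉ F}, ‖f i‖ := by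
    rw [lpOne_norm_eq_tsum, (lpOne_summable_norm f).sum_add_tsum_subtype_compl]
  have hJ : ‖J f q‖ ≤ ‖J f‖ := by simpa using (J f).le_opNorm_of_le hq
  have hF' : ‖((∑ i ∈ F, ‖f i‖ : ℝ) : 𝕜)‖ = ∑ i ∈ F, ‖f i‖ := by
    rw [RCLike.norm_ofReal, abs_of_nonneg (Finset.sum_nonneg fun i _ => norm_nonneg _)]
  linarith [norm_sub_norm_le ((∑ i ∈ F, ‖f i‖ : ℝ) : 𝕜) (J f q)]

theorem exists_apply_eq_of_inCanonicalImage (hU' : ∀ i, (U i : Filter ℕ) ≤ cofinite)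
    {f : lp (fun _ : ι => 𝕜) 1}
    (hJ : InCanonicalImage 𝕜 𝒰 (ultrapowerDualEmbedding 𝒰 (norm_le_one_of_isometric he) U f))
    (F : Finset ι) {c : ι → 𝕜} (hc : ∀ i, ‖c i‖ = 1) :
    ∃ q q' : Ultrapower 𝕜 𝒰 X, ‖q‖ ≤ 1 ∧ ‖q'‖ ≤ 1 ∧
      ultrapowerDualEmbedding 𝒰 (norm_le_one_of_isometric he) U f q =
        ultrapowerDualEmbedding 𝒰 (norm_le_one_of_isometric he) U f q' ∧
      (∀ i ∈ F, limitFunctional 𝒰 e (U i) q = c i) ∧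
      ∀ i, limitFunctional 𝒰 e (U i) q' = -1 := by
  classical
  have he1 := norm_le_one_of_isometric he
  have hl : (𝒰 : Filter ℕ) ≤ atTop := h𝒰.trans Nat.cofinite_eq_atTop.le
  obtain ⟨s, hs, hsF⟩ := Ultrafilter.exists_unimodular_eventually_eq hU F hc
  -- `t d` agrees with `s` from `d` on, so it has the same limits along nonprincipal
  -- ultrafilters, while `t d → -1` pointwise as `d → ∞`.
  set t : ℕ → ℕ → 𝕜 := fun d n => if d ≤ n then s n else -1
  choose x hx1 hx using fun d => exists_boundedSeq_approxPattern he (s := t d)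
    fun n => by by_cases h : d ≤ n <;> simp [t, h, hs]
  have hxlim : ∀ d n, Tendsto (fun k => e n (x d k)) 𝒰 (𝓝 (t d n)) := fun d =>
    tendsto_apply_of_approxPattern hl (hx d) fun n => .of_forall fun _ => rfl
  have hφ : ∀ d i, limitFunctional 𝒰 e (U i) (up 𝕜 𝒰 (x d)) =
      limitFunctional 𝒰 e (U i) (up 𝕜 𝒰 (x 0)) := fun d i =>
    tendsto_nhds_unique (tendsto_limitFunctional_up he1 (hxlim d ·))
      ((tendsto_limitFunctional_up he1 (hxlim 0 ·)).congr'
        (Filter.mem_of_superset ((hU' i).trans Nat.cofinite_eq_atTop.le (eventually_ge_atTop d))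
          fun n hn => by simp [t, hn.out]))
  obtain ⟨y, hy1, hylim, hyJ⟩ := hJ.exists_tendsto_of_approxPattern h𝒰
    (fun d n hn => if_neg (not_le.2 hn)) hx fun d => by
      simp only [ultrapowerDualEmbedding, lpOneSum_apply_apply, hφ d]
  exact ⟨up 𝕜 𝒰 (x 0), up 𝕜 𝒰 y, (norm_up_le 𝒰 _).trans (hx1 0), (norm_up_le 𝒰 _).trans hy1,
    hyJ.symm, fun i hi => limitFunctional_up_eq he1 (hxlim 0)
      ((hsF i hi).mono fun n hn => by simpa [t] using hn),
    fun i => limitFunctional_up_eq he1 hylim (.of_forall fun _ => rfl)⟩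

theorem not_inCanonicalImage_ultrapowerDualEmbedding (hU' : ∀ i, (U i : Filter ℕ) ≤ cofinite)
    {f : lp (fun _ : ι => 𝕜) 1} (hf : f ≠ 0) :
    ¬ InCanonicalImage 𝕜 𝒰 (ultrapowerDualEmbedding 𝒰 (norm_le_one_of_isometric he) U f) := by
  classical
  intro hJ
  obtain ⟨i₀, hi₀⟩ : ∃ i₀, f i₀ ≠ 0 := by
    by_contra! h
    exact hf (lp.ext (funext h))
  obtain ⟨F, hi₀F, hF⟩ := lpOne_exists_tsum_compl_lt f (norm_pos_iff.2 hi₀) {i₀}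
  replace hi₀F : i₀ ∈ F := hi₀F (Finset.mem_singleton_self i₀)
  obtain ⟨q, q', hq, hq', hJq, hφq, hφq'⟩ :=
    exists_apply_eq_of_inCanonicalImage h𝒰 he hU hU' hJ F
      (c := fun i => if i = i₀ then 1 else -1) fun i => by by_cases h : i = i₀ <;> simp [h]
  set J := ultrapowerDualEmbedding 𝒰 (norm_le_one_of_isometric he) U
  set φ := fun i => limitFunctional 𝒰 e (U i)
  have hdiff : ∑ i ∈ F, f i * φ i q - ∑ i ∈ F, f i * φ i q' = 2 * f i₀ := by
    rw [← Finset.sum_sub_distrib, Finset.sum_eq_single_of_mem i₀ hi₀F fun i hi hne => by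
      simp [φ, hφq i hi, hφq', hne]]
    simp [φ, hφq i₀ hi₀F, hφq']
    ring
  have key : 2 * f i₀ = (J f q' - ∑ i ∈ F, f i * φ i q') - (J f q - ∑ i ∈ F, f i * φ i q) := by
    rw [← hdiff, hJq]; ring
  have h := norm_sub_le (J f q' - ∑ i ∈ F, f i * φ i q') (J f q - ∑ i ∈ F, f i * φ i q)
  rw [← key, norm_mul, RCLike.norm_ofNat] at h
  linarith [norm_ultrapowerDualEmbedding_apply_sub_sum_le (norm_le_one_of_isometric he) U f hq F,
    norm_ultrapowerDualEmbedding_apply_sub_sum_le (norm_le_one_of_isometric he) U f hq' F]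

end UltrapowerDualEmbedding

theorem dual_of_ultrapower_contains_large_ell_one_general
    (𝒰 : Ultrafilter ℕ) (h𝒰 : (𝒰 : Filter ℕ) ≤ Filter.cofinite)
    {𝕜 : Type*} [RCLike 𝕜] (X : Type*) [NormedAddCommGroup X] [NormedSpace 𝕜 X]
    (e : ℕ → StrongDual 𝕜 X)
    (he : ∀ (m : ℕ) (r : ℕ → 𝕜),
      ‖∑ n ∈ Finset.range m, r n • e n‖ = ∑ n ∈ Finset.range m, ‖r n‖) :
    ∃ (I : Type) (_ : Cardinal.mk I = (2 : Cardinal) ^ ((2 : Cardinal) ^ Cardinal.aleph0))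
      (J : lp (fun _ : I => 𝕜) 1 →ₗᵢ[𝕜] StrongDual 𝕜 (Ultrapower 𝕜 𝒰 X)),
      ∀ f : lp (fun _ : I => 𝕜) 1, f ≠ 0 → ¬ InCanonicalImage 𝕜 𝒰 (J f) :=
  ⟨{𝒱 : Ultrafilter ℕ // (𝒱 : Filter ℕ) ≤ cofinite}, mk_nonprincipal_ultrafilter ℕ,
    { ultrapowerDualEmbedding 𝒰 (norm_le_one_of_isometric he) Subtype.val with
      norm_map' := norm_ultrapowerDualEmbedding h𝒰 he Subtype.val_injective },
    fun _ hf => not_inCanonicalImage_ultrapowerDualEmbedding h𝒰 he Subtype.val_injective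
      (fun 𝒱 => 𝒱.2) hf⟩

/-- Let `𝕜` be `ℝ` or `ℂ` and let `X` be an infinite-dimensional normed
space over `𝕜` whose dual contains an isometric copy of `ℓ¹`.  Then `(X^𝒰)*` contains an
isometric copy of `ℓ¹(I)` with `#I = 2^(2^ℵ₀)`, meeting the image of the canonical
isometry `j : (X*)^𝒰 → (X^𝒰)*` only in `0`. -/
theorem dual_of_ultrapower_contains_large_ell_one
    (𝒰 : Ultrafilter ℕ) (h𝒰 : (𝒰 : Filter ℕ) ≤ Filter.cofinite)
    {𝕜 : Type*} [RCLike 𝕜] (X : Type*) [NormedAddCommGroup X] [NormedSpace 𝕜 X]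
    (hdim : ¬ FiniteDimensional 𝕜 X)
    (e : ℕ → StrongDual 𝕜 X)
    (he : ∀ (m : ℕ) (r : ℕ → 𝕜),
      ‖∑ n ∈ Finset.range m, r n • e n‖ = ∑ n ∈ Finset.range m, ‖r n‖) :
    ∃ (I : Type) (_ : Cardinal.mk I = (2 : Cardinal) ^ ((2 : Cardinal) ^ Cardinal.aleph0))
      (J : lp (fun _ : I => 𝕜) 1 →ₗᵢ[𝕜] StrongDual 𝕜 (Ultrapower 𝕜 𝒰 X)),
      ∀ f : lp (fun _ : I => 𝕜) 1, f ≠ 0 → ¬ InCanonicalImage 𝕜 𝒰 (J f) :=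
  dual_of_ultrapower_contains_large_ell_one_general 𝒰 h𝒰 X e he
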